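/- Let b ∈ F_q with b ∉ Θ(F_q) (equivalently, x² + x + b is irreducible over F_q). Then for every a ∈ F_q*, the sum of λ(a·(α² + α + b)^{-1}) over all α ∈ F_q equals −K(a) − 1. -/

import Mathlib

open Finset

/-- The trace map `tr : F_q → F_2 ⊆ F_q`, `tr x = x + x² + ⋯ + x^(2^(r-1))`. -/
def trF {F : Type*} [Field F] (r : ℕ) (x : F) : F :=
  ∑ i ∈ Finset.range r, x ^ (2 ^ i)

/-- The canonical additive character `λ(x) = (-1)^(tr x) ∈ ℤ` of `F_q`. -/
def lamF {F : Type*} [Field F] [DecidableEq F] (r : ℕ) (x : F) : ℤ :=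
  if trF r x = 0 then 1 else -1

/-- The Kloosterman sum `K(a) = ∑_{α ∈ F_q*} λ(α + a·α⁻¹)`. -/
def Kloos {F : Type*} [Field F] [Fintype F] [DecidableEq F] (r : ℕ) (a : F) : ℤ :=
  ∑ α ∈ Finset.univ.filter (fun α : F => α ≠ 0), lamF r (α + a * α⁻¹)

/-! In characteristic 2 the map `α ↦ α² + α` is 2-to-1, its image lies in the
kernel of the trace, and that kernel is the root set of a polynomial of degree `2^(r-1)`; so the
image is exactly the kernel, and `α² + α = c` has `1 + λ(c)` solutions. As `tr b = 1`, the
equation `α² + α + b = t` has `1 + λ(t + b) = 1 - λ(t)` solutions, and the sum becomes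
`∑ₜ (1 - λ(t)) λ(a t⁻¹)`. Here `∑ₜ λ(a t⁻¹) = ∑ₜ λ(t) = 0`, because `t ↦ a t⁻¹` permutes `F`
(with `0⁻¹ = 0`), and `∑ₜ λ(t) λ(a t⁻¹) = ∑ₜ λ(t + a t⁻¹) = 1 + K(a)`, the `1` being the term
`t = 0`. -/

theorem FiniteField.pos_of_card_eq_two_pow {F : Type*} [Field F] [Fintype F] {r : ℕ}
    (hF : Fintype.card F = 2 ^ r) : 0 < r :=
  Nat.pos_of_ne_zero (by rintro rfl; simpa [hF] using Fintype.one_lt_card (α := F))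

theorem FiniteField.charP_two_of_card_eq_two_pow {F : Type*} [Field F] [Fintype F] {r : ℕ}
    (hF : Fintype.card F = 2 ^ r) : CharP F 2 := by
  refine ringChar.eq_iff.1 (FiniteField.even_card_iff_char_two.2 ?_)
  rw [hF, Nat.pow_mod]
  simp [(pos_of_card_eq_two_pow hF).ne']

theorem sum_apply_mul_inv {G₀ M : Type*} [GroupWithZero G₀] [Fintype G₀] [AddCommMonoid M]
    {a : G₀} (ha : a ≠ 0) (f : G₀ → M) : ∑ t, f (a * t⁻¹) = ∑ t, f t :=
  Fintype.sum_equiv ((Equiv.inv G₀).trans (Equiv.mulLeft₀ a ha)) _ _ fun _ => rfl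

section CharTwo

variable {F : Type*} [Field F] [CharP F 2]

theorem sq_add_self_eq_sq_add_self_iff {α β : F} :
    α ^ 2 + α = β ^ 2 + β ↔ α = β ∨ α = β + 1 := by
  have key : α ^ 2 + α - (β ^ 2 + β) = (α - β) * (α - (β + 1)) := by
    linear_combination (α + α * β - β ^ 2 - β) * CharTwo.two_eq_zero (R := F)
  rw [← sub_eq_zero, key, mul_eq_zero, sub_eq_zero, sub_eq_zero]

theorem card_filter_sq_add_self_eq_of_eq [Fintype F] [DecidableEq F] {α₀ c : F}
    (h : α₀ ^ 2 + α₀ = c) : #{α | α ^ 2 + α = c} = 2 := by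
  have : ({α | α ^ 2 + α = c} : Finset F) = {α₀, α₀ + 1} := by
    ext α
    simp [← h, sq_add_self_eq_sq_add_self_iff]
  rw [this, card_pair (by simp)]

theorem two_mul_card_image_sq_add_self [Fintype F] [DecidableEq F] :
    2 * #(univ.image fun α : F => α ^ 2 + α) = Fintype.card F := by
  rw [← card_univ, card_eq_sum_card_image (fun α : F => α ^ 2 + α) univ,
    sum_congr rfl fun c hc => ?_, sum_const, smul_eq_mul, mul_comm]
  obtain ⟨α₀, -, h⟩ := mem_image.1 hc
  exact card_filter_sq_add_self_eq_of_eq h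

theorem trF_add (r : ℕ) (x y : F) : trF r (x + y) = trF r x + trF r y := by
  simp only [trF, add_pow_char_pow, sum_add_distrib]

theorem sq_trF (r : ℕ) (x : F) : trF r x ^ 2 = trF r (x ^ 2) := by
  simp only [trF, sum_pow_char, ← pow_mul, mul_comm]

end CharTwo

theorem trF_zero {F : Type*} [Field F] (r : ℕ) : trF r (0 : F) = 0 := by
  simp [trF]

open Polynomial in
theorem card_filter_trF_eq_zero_le {F : Type*} [Field F] [Fintype F] [DecidableEq F] {r : ℕ}
    (hr : 0 < r) : #{x : F | trF r x = 0} ≤ 2 ^ (r - 1) := by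
  set P : F[X] := ∑ i ∈ range r, X ^ 2 ^ i
  have hcoeff : P.coeff (2 ^ (r - 1)) = 1 := by
    simp [P, coeff_X_pow, hr]
  refine (card_le_degree_of_subset_roots (p := P) fun x hx => ?_).trans ?_
  · refine mem_roots'.2 ⟨fun h => by simp [h] at hcoeff, ?_⟩
    simpa [P, eval_finsetSum, trF] using (mem_filter.1 hx).2
  · exact natDegree_sum_le_of_forall_le _ _ fun i hi => by
      simpa using Nat.pow_le_pow_right two_pos (by simp at hi; omega)

section FiniteFieldCharTwo

variable {F : Type*} [Field F] [Fintype F] {r : ℕ}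

theorem trF_sq (hF : Fintype.card F = 2 ^ r) (x : F) : trF r (x ^ 2) = trF r x := by
  have hx : x ^ 2 ^ r = x := by rw [← hF, FiniteField.pow_card]
  have := sum_range_succ' (fun i => x ^ 2 ^ i) r
  rw [sum_range_succ, hx, pow_zero, pow_one, add_left_inj] at this
  simp only [trF, ← pow_mul, ← pow_succ', this]

theorem trF_eq_zero_or_one (hF : Fintype.card F = 2 ^ r) (x : F) :
    trF r x = 0 ∨ trF r x = 1 := by
  have := FiniteField.charP_two_of_card_eq_two_pow hF
  exact IsIdempotentElem.iff_eq_zero_or_one.1 <| by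
    rw [IsIdempotentElem, ← sq, sq_trF, trF_sq hF]

theorem trF_sq_add_self (hF : Fintype.card F = 2 ^ r) (α : F) : trF r (α ^ 2 + α) = 0 := by
  have := FiniteField.charP_two_of_card_eq_two_pow hF
  rw [trF_add, trF_sq hF, CharTwo.add_self_eq_zero]

theorem exists_sq_add_self_eq_iff_trF_eq_zero [DecidableEq F] (hF : Fintype.card F = 2 ^ r)
    {c : F} : (∃ α, α ^ 2 + α = c) ↔ trF r c = 0 := by
  have := FiniteField.charP_two_of_card_eq_two_pow hF
  have hr := FiniteField.pos_of_card_eq_two_pow hF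
  have himage : univ.image (fun α : F => α ^ 2 + α) = ({x | trF r x = 0} : Finset F) := by
    refine eq_of_subset_of_card_le (fun x hx => ?_) ?_
    · obtain ⟨α, -, rfl⟩ := mem_image.1 hx
      simpa using trF_sq_add_self hF α
    · have hcard := two_mul_card_image_sq_add_self (F := F)
      have hpow : 2 ^ r = 2 * 2 ^ (r - 1) := by rw [← pow_succ']; congr; omega
      have := card_filter_trF_eq_zero_le (F := F) hr
      omega
  simpa using Finset.ext_iff.1 himage c

theorem lamF_add [DecidableEq F] (hF : Fintype.card F = 2 ^ r) (x y : F) :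
    lamF r (x + y) = lamF r x * lamF r y := by
  have := FiniteField.charP_two_of_card_eq_two_pow hF
  rcases trF_eq_zero_or_one hF x with hx | hx <;> rcases trF_eq_zero_or_one hF y with hy | hy <;>
    simp [lamF, trF_add, hx, hy, CharTwo.add_self_eq_zero]

theorem card_filter_sq_add_self_eq [DecidableEq F] (hF : Fintype.card F = 2 ^ r) (c : F) :
    (#{α | α ^ 2 + α = c} : ℤ) = 1 + lamF r c := by
  have := FiniteField.charP_two_of_card_eq_two_pow hF
  by_cases h : ∃ α, α ^ 2 + α = c
  · obtain ⟨α₀, hα₀⟩ := h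
    rw [card_filter_sq_add_self_eq_of_eq hα₀, lamF,
      if_pos ((exists_sq_add_self_eq_iff_trF_eq_zero hF).1 ⟨α₀, hα₀⟩)]
    norm_num
  · rw [lamF, if_neg (mt (exists_sq_add_self_eq_iff_trF_eq_zero hF).2 h),
      filter_eq_empty_iff.2 (by simpa using h)]
    simp

theorem sum_lamF [DecidableEq F] (hF : Fintype.card F = 2 ^ r) : ∑ x : F, lamF r x = 0 := by
  have h := congr_arg (Nat.cast : ℕ → ℤ) <|
    card_eq_sum_card_fiberwise (s := univ) (t := univ) (f := fun α : F => α ^ 2 + α)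
      fun _ _ => mem_univ _
  simp only [Nat.cast_sum, card_filter_sq_add_self_eq hF, sum_add_distrib, sum_const,
    card_univ, nsmul_eq_mul, mul_one] at h
  linarith

theorem sum_lamF_mul_lamF_mul_inv [DecidableEq F] (hF : Fintype.card F = 2 ^ r) (a : F) :
    ∑ t : F, lamF r t * lamF r (a * t⁻¹) = 1 + Kloos r a := by
  simp only [← lamF_add hF]
  rw [Kloos, filter_ne', ← add_sum_erase _ _ (mem_univ 0)]
  simp [lamF, trF_zero]

theorem sum_comp_sq_add_self_add [DecidableEq F] (hF : Fintype.card F = 2 ^ r) {b : F}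
    (hb : ∀ α : F, α ^ 2 + α ≠ b) (f : F → ℤ) :
    ∑ α : F, f (α ^ 2 + α + b) = ∑ t : F, (1 - lamF r t) * f t := by
  have := FiniteField.charP_two_of_card_eq_two_pow hF
  have hlam_b : lamF r b = -1 := by
    rw [lamF, if_neg fun h => ?_]
    obtain ⟨α, hα⟩ := (exists_sq_add_self_eq_iff_trF_eq_zero hF).2 h
    exact hb α hα
  rw [← sum_fiberwise' univ (fun α => α ^ 2 + α + b) f]
  refine sum_congr rfl fun t _ => ?_
  have hfiber : #{α | α ^ 2 + α + b = t} = #{α | α ^ 2 + α = t + b} := by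
    simp only [← CharTwo.sub_eq_add, eq_sub_iff_add_eq]
  rw [sum_const, nsmul_eq_mul, hfiber, card_filter_sq_add_self_eq hF, lamF_add hF, hlam_b]
  ring

end FiniteFieldCharTwo

theorem sum_lam_artinSchreier_shift_inv_general {F : Type*} [Field F] [Fintype F] [DecidableEq F]
    (r : ℕ) (hF : Fintype.card F = 2 ^ r)
    (b : F) (hb : ∀ α : F, α ^ 2 + α ≠ b)
    (a : F) (ha : a ≠ 0) :
    ∑ α : F, lamF r (a * (α ^ 2 + α + b)⁻¹) = -(Kloos r a) - 1 := by
  calc ∑ α : F, lamF r (a * (α ^ 2 + α + b)⁻¹)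
      = ∑ t : F, (1 - lamF r t) * lamF r (a * t⁻¹) :=
        sum_comp_sq_add_self_add hF hb fun t => lamF r (a * t⁻¹)
    _ = ∑ t : F, lamF r (a * t⁻¹) - ∑ t : F, lamF r t * lamF r (a * t⁻¹) := by
        simp only [sub_mul, one_mul, sum_sub_distrib]
    _ = -(Kloos r a) - 1 := by
        rw [sum_apply_mul_inv ha, sum_lamF hF, sum_lamF_mul_lamF_mul_inv hF]
        ring

/-- If `b ∉ Θ(F_q) = {α² + α : α ∈ F_q}` (equivalently `x² + x + b` is irreducible over
`F_q`), then for every `a ∈ F_q*`, `∑_{α ∈ F_q} λ(a·(α² + α + b)⁻¹) = −K(a) − 1`. -/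
theorem sum_lam_artinSchreier_shift_inv {F : Type*} [Field F] [Fintype F] [DecidableEq F]
    (r : ℕ) (hr : 0 < r) (hF : Fintype.card F = 2 ^ r)
    (b : F) (hb : ∀ α : F, α ^ 2 + α ≠ b)
    (a : F) (ha : a ≠ 0) :
    ∑ α : F, lamF r (a * (α ^ 2 + α + b)⁻¹) = -(Kloos r a) - 1 :=
  sum_lam_artinSchreier_shift_inv_general r hF b hb a ha
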